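/- arXiv:1905.09413 — 3 statements merged into one kernel-verified Lean document; each statement's English description precedes it below -/
import Mathlib

section
/- For a qubit with states |ψ⟩ = cosθ|0⟩ + sinθ|1⟩ and |φ⟩ = cosθ|0⟩ − sinθ|1⟩ prepared with probabilities p and 1−p respectively, the minimum over all POVMs {E_ψ, E_φ} (E_ψ, E_φ ⪰ 0, E_ψ + E_φ = I) of the error probability p·Tr(|ψ⟩⟨ψ| E_φ) + (1−p)·Tr(|φ⟩⟨φ| E_ψ) equals (1/2)(1 − √(1 − 4p(1−p)|⟨ψ|φ⟩|²)). -/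
/-!
Writing `Γ = (1 - p) |φ⟩⟨φ| - p |ψ⟩⟨ψ|`, the error probability of `{E, 1 - E}` is `p + tr (Γ E)`.
The symmetric matrix `Γ = !![a, b; b, d]` has eigenvalues `λ± = (a + d ± S) / 2` with
`S = √((a - d)² + 4b²)`, and `det Γ ≤ 0` gives `λ₋ ≤ 0 ≤ λ₊`. Both `Γ - λ₋` and `λ₊ - Γ` are
positive semidefinite, so `tr (Γ E) - λ₋` equals both `λ₋ (tr E - 1) + tr ((Γ - λ₋) E)` and
`λ₊ (tr E - 1) + tr ((λ₊ - Γ) (1 - E))`; one of the two is visibly nonnegative according as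
`tr E ≤ 1` or `tr E ≥ 1`. The bound `λ₋` is attained by the projection `(λ₊ - Γ) / S` onto the
`λ₋`-eigenspace. For the two given states `tr Γ = 1 - 2p` and `S² = 1 - 4p(1-p) cos² 2θ`.
-/

open Real Matrix
open scoped ComplexOrder

theorem Matrix.PosSemidef.trace_mul_nonneg {𝕜 n : Type*} [RCLike 𝕜] [Fintype n]
    {A E : Matrix n n 𝕜} (hA : A.PosSemidef) (hE : E.PosSemidef) : 0 ≤ (A * E).trace := by
  obtain ⟨m, v, rfl⟩ := posSemidef_iff_eq_sum_vecMulVec.mp hA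
  rw [Finset.sum_mul, trace_sum]
  refine Finset.sum_nonneg fun i _ => ?_
  rw [vecMulVec_mul, trace_vecMulVec, dotProduct_comm, ← dotProduct_mulVec]
  exact hE.dotProduct_mulVec_nonneg _

theorem Matrix.posSemidef_fin_two_of {a b d : ℝ} (ha : 0 ≤ a) (hd : 0 ≤ d) (hb : b ^ 2 ≤ a * d) :
    (!![a, b; b, d] : Matrix (Fin 2) (Fin 2) ℝ).PosSemidef := by
  refine .of_dotProduct_mulVec_nonneg ?_ fun x => ?_
  · ext i j; fin_cases i <;> fin_cases j <;> rfl
  · simp only [star_trivial, dotProduct, mulVec, Fin.sum_univ_two, cons_val_zero, cons_val_one,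
      of_apply, cons_val', empty_val', cons_val_fin_one]
    rcases ha.eq_or_lt with rfl | ha
    · obtain rfl : b = 0 := by nlinarith
      nlinarith [sq_nonneg (x 1)]
    · nlinarith [sq_nonneg (a * x 0 + b * x 1), mul_nonneg hd (sq_nonneg (x 1))]

theorem povm_error_eq_trace_mul {R n : Type*} [CommRing R] [Fintype n] [DecidableEq n]
    (p : R) (ρ σ E : Matrix n n R) :
    p * (ρ * (1 - E)).trace + (1 - p) * (σ * E).trace =
      p * ρ.trace + (((1 - p) • σ - p • ρ) * E).trace := by
  simp only [Matrix.mul_sub, Matrix.mul_one, Matrix.sub_mul, smul_mul_assoc, trace_sub, trace_smul,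
    smul_eq_mul]
  ring

section SymmetricTwoByTwo

variable {a b d S : ℝ}

/-- For `S ≥ 0` with equality in the hypothesis this is `!![a, b; b, d] - λ₋ • 1`, and after
`(a, b, d) ↦ (d, -b, a)` it is `λ₊ • 1 - !![a, b; b, d]`, where `λ± = (a + d ± S) / 2`. -/
theorem posSemidef_fin_two_of_sq_le (hS : 0 ≤ S) (hS2 : (a - d) ^ 2 + 4 * b ^ 2 ≤ S ^ 2) :
    (!![(S + (a - d)) / 2, b; b, (S - (a - d)) / 2] : Matrix (Fin 2) (Fin 2) ℝ).PosSemidef := by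
  have ⟨h₁, h₂⟩ := abs_le.mp (abs_le_of_sq_le_sq (by nlinarith : (a - d) ^ 2 ≤ S ^ 2) hS)
  exact posSemidef_fin_two_of (by linarith) (by linarith) (by nlinarith)

theorem le_trace_mul_fin_two (hdet : a * d ≤ b ^ 2) (hS : 0 ≤ S)
    (hS2 : S ^ 2 = (a - d) ^ 2 + 4 * b ^ 2) {E : Matrix (Fin 2) (Fin 2) ℝ}
    (hE : E.PosSemidef) (hE' : (1 - E).PosSemidef) :
    (a + d - S) / 2 ≤ (!![a, b; b, d] * E).trace := by
  have hA := (posSemidef_fin_two_of_sq_le hS hS2.ge).trace_mul_nonneg hE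
  have hB := (posSemidef_fin_two_of_sq_le (a := d) (b := -b) (d := a) hS
    (by linarith)).trace_mul_nonneg hE'
  have hlo : a + d - S ≤ 0 := by nlinarith
  have hhi : 0 ≤ a + d + S := by nlinarith
  rw [one_fin_two] at hB
  simp only [trace_fin_two, mul_apply, Fin.sum_univ_two, of_apply, cons_val', cons_val_zero,
    cons_val_one, empty_val', cons_val_fin_one, Matrix.sub_apply] at hA hB ⊢
  rcases le_total (E 0 0 + E 1 1) 1 with h | h
  · nlinarith [mul_nonneg_of_nonpos_of_nonpos hlo (sub_nonpos.mpr h)]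
  · nlinarith [mul_nonneg hhi (sub_nonneg.mpr h)]

theorem exists_povm_trace_mul_fin_two_eq (hS : 0 ≤ S) (hS2 : S ^ 2 = (a - d) ^ 2 + 4 * b ^ 2) :
    ∃ E : Matrix (Fin 2) (Fin 2) ℝ, E.PosSemidef ∧ (1 - E).PosSemidef ∧
      (!![a, b; b, d] * E).trace = (a + d - S) / 2 := by
  rcases hS.eq_or_lt with rfl | hS
  · refine ⟨(1 / 2 : ℝ) • 1, PosSemidef.one.smul (by norm_num), ?_, ?_⟩
    · rw [show (1 : Matrix (Fin 2) (Fin 2) ℝ) - (1 / 2 : ℝ) • 1 = (1 / 2 : ℝ) • 1 by module]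
      exact PosSemidef.one.smul (by norm_num)
    · rw [Matrix.mul_smul, Matrix.mul_one, trace_smul, trace_fin_two_of, smul_eq_mul]
      ring
  · refine ⟨S⁻¹ • !![(S + (d - a)) / 2, -b; -b, (S - (d - a)) / 2],
      (posSemidef_fin_two_of_sq_le hS.le (by linarith)).smul (by positivity), ?_, ?_⟩
    · convert (posSemidef_fin_two_of_sq_le hS.le hS2.ge).smul (inv_nonneg.mpr hS.le) using 1
      ext i j
      fin_cases i <;> fin_cases j <;> simp [one_apply] <;> field_simp <;> ring
    · rw [Matrix.mul_smul, trace_smul, mul_fin_two, trace_fin_two_of, smul_eq_mul]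
      field_simp
      linear_combination hS2

theorem isLeast_povm_error_fin_two {p : ℝ} {ρ σ : Matrix (Fin 2) (Fin 2) ℝ} (hρ : ρ.trace = 1)
    (hΓ : (1 - p) • σ - p • ρ = !![a, b; b, d]) (hdet : a * d ≤ b ^ 2) (hS : 0 ≤ S)
    (hS2 : S ^ 2 = (a - d) ^ 2 + 4 * b ^ 2) :
    IsLeast {x | ∃ E : Matrix (Fin 2) (Fin 2) ℝ, E.PosSemidef ∧ (1 - E).PosSemidef ∧
      x = p * (ρ * (1 - E)).trace + (1 - p) * (σ * E).trace} (p + (a + d - S) / 2) := by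
  simp only [povm_error_eq_trace_mul, hρ, hΓ, mul_one]
  obtain ⟨E, hE, hE', hx⟩ := exists_povm_trace_mul_fin_two_eq hS hS2
  refine ⟨⟨E, hE, hE', by rw [hx]⟩, ?_⟩
  rintro _ ⟨E, hE, hE', rfl⟩
  exact (add_le_add_iff_left p).mpr (le_trace_mul_fin_two hdet hS hS2 hE hE')

end SymmetricTwoByTwo

/-- Helstrom bound for binary minimum-error discrimination of the pure
qubit states |ψ⟩ = cosθ|0⟩ + sinθ|1⟩ and |φ⟩ = cosθ|0⟩ − sinθ|1⟩ with priors p, 1−p: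
the minimum over POVMs {E_ψ, E_φ} of the error probability equals
(1/2)(1 − √(1 − 4p(1−p)|⟨ψ|φ⟩|²)), where |⟨ψ|φ⟩|² = cos²(2θ). -/
theorem stmt_1 (θ p : ℝ) (hp : p ∈ Set.Icc (0:ℝ) 1)
    (ψ φ : Fin 2 → ℝ) (hψ : ψ = ![Real.cos θ, Real.sin θ])
    (hφ : φ = ![Real.cos θ, -Real.sin θ]) :
    IsLeast
      {x : ℝ | ∃ E : Matrix (Fin 2) (Fin 2) ℝ,
        E.PosSemidef ∧ (1 - E).PosSemidef ∧
        x = p * ((vecMulVec ψ ψ) * (1 - E)).trace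
            + (1 - p) * ((vecMulVec φ φ) * E).trace}
      ((1/2) * (1 - Real.sqrt (1 - 4*p*(1-p) * (Real.cos (2*θ))^2))) := by
  obtain ⟨hp0, hp1⟩ := hp
  subst hψ hφ
  have hpyth := sin_sq_add_cos_sq θ
  have hρ : (vecMulVec ![cos θ, sin θ] ![cos θ, sin θ]).trace = 1 := by
    simp only [trace_vecMulVec, dotProduct, Fin.sum_univ_two, cons_val_zero, cons_val_one,
      cons_val_fin_one]
    linear_combination hpyth
  have hΓ : (1 - p) • vecMulVec ![cos θ, -sin θ] ![cos θ, -sin θ]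
      - p • vecMulVec ![cos θ, sin θ] ![cos θ, sin θ] =
      !![(1 - 2 * p) * cos θ ^ 2, -(cos θ * sin θ); -(cos θ * sin θ), (1 - 2 * p) * sin θ ^ 2] := by
    ext i j
    fin_cases i <;> fin_cases j <;> simp <;> ring
  have hD : 1 - 4 * p * (1 - p) * cos (2 * θ) ^ 2 =
      ((1 - 2 * p) * cos θ ^ 2 - (1 - 2 * p) * sin θ ^ 2) ^ 2 + 4 * (-(cos θ * sin θ)) ^ 2 := by
    rw [cos_two_mul']
    linear_combination (-(1 + cos θ ^ 2 + sin θ ^ 2)) * hpyth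
  have hdet : (1 - 2 * p) * cos θ ^ 2 * ((1 - 2 * p) * sin θ ^ 2) ≤ (-(cos θ * sin θ)) ^ 2 := by
    nlinarith [mul_nonneg (mul_nonneg hp0 (sub_nonneg.2 hp1)) (sq_nonneg (cos θ * sin θ))]
  have hS2 : √(1 - 4 * p * (1 - p) * cos (2 * θ) ^ 2) ^ 2 =
      ((1 - 2 * p) * cos θ ^ 2 - (1 - 2 * p) * sin θ ^ 2) ^ 2 + 4 * (-(cos θ * sin θ)) ^ 2 := by
    rw [sq_sqrt (hD ▸ by positivity), hD]
  have h := isLeast_povm_error_fin_two hρ hΓ hdet (sqrt_nonneg _) hS2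
  rwa [show p + ((1 - 2 * p) * cos θ ^ 2 + (1 - 2 * p) * sin θ ^ 2
    - √(1 - 4 * p * (1 - p) * cos (2 * θ) ^ 2)) / 2 =
      1 / 2 * (1 - √(1 - 4 * p * (1 - p) * cos (2 * θ) ^ 2)) by
    linear_combination ((1 - 2 * p) / 2) * hpyth] at h
end

section
/- Let n = 4m with m ≥ 2 an integer, r_n = √(sec(π/n)), and let l ∈ {1,…,m−1} and k ∈ ℤ. If (1/2)(1 + r_n²·cos((4l+2k+1)π/n)) = (1/2)(1 − r_n²·cos((2k+1)π/n)) then there is a contradiction; i.e., for no integer k do the two conditional error probabilities in discriminating ω₀ from ω_{2l} coincide. -/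
/-!
Clearing the common factor `sec (π / 4m) ≠ 0`, equality of the two probabilities means
`cos A + cos B = 0` with `A = (4l + 2k + 1)π/4m` and `B = (2k + 1)π/4m`, i.e.
`2 cos ((2l + 2k + 1)π/4m) · cos (lπ/2m) = 0`. The first factor vanishes only if
`2(2l + 2k + 1)` is an odd multiple of `4m`, which fails modulo 4; the second cannot vanish
because `0 < lπ/2m < π/2` when `0 < l < m`.
-/

open Real

lemma cos_odd_mul_pi_div_four_mul_ne_zero (a : ℤ) {m : ℕ} (hm : 0 < m) :
    cos ((2 * a + 1) * π / (4 * m)) ≠ 0 := by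
  rw [cos_ne_zero_iff]
  intro j hj
  have hreal : ((2 * a + 1) * 2 : ℝ) = (2 * j + 1) * (4 * m) := by
    have hm' : (m : ℝ) ≠ 0 := by positivity
    field_simp at hj
    linear_combination hj
  have hint : (2 * a + 1) * 2 = 4 * ((2 * j + 1) * (m : ℤ)) := by
    have : ((2 * a + 1) * 2 : ℤ) = (2 * j + 1) * (4 * m) := by exact_mod_cast hreal
    linear_combination this
  omega

lemma cos_mul_pi_div_two_mul_pos {l m : ℕ} (hl : 0 < l) (hlm : l < m) :
    0 < cos (l * π / (2 * m)) := by
  have hm : (0 : ℝ) < m := by exact_mod_cast hl.trans hlm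
  have hlm' : (l : ℝ) < m := by exact_mod_cast hlm
  apply cos_pos_of_mem_Ioo
  constructor
  · have : 0 < l * π / (2 * m) := by positivity
    linarith [pi_pos]
  · rw [div_lt_iff₀ (by positivity)]
    nlinarith [pi_pos]

lemma cos_add_cos_ne_zero {l m : ℕ} (hl : 0 < l) (hlm : l < m) (k : ℤ) :
    cos ((4 * (l : ℝ) + 2 * k + 1) * π / (4 * m)) + cos ((2 * (k : ℝ) + 1) * π / (4 * m)) ≠ 0 := by
  have hm : (m : ℝ) ≠ 0 := by exact_mod_cast (hl.trans hlm).ne'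
  have hmean : ((4 * (l : ℝ) + 2 * k + 1) * π / (4 * m) + (2 * (k : ℝ) + 1) * π / (4 * m)) / 2
      = (2 * ((l + k : ℤ) : ℝ) + 1) * π / (4 * m) := by
    push_cast; field_simp; ring
  have hhalfdiff : ((4 * (l : ℝ) + 2 * k + 1) * π / (4 * m) - (2 * (k : ℝ) + 1) * π / (4 * m)) / 2
      = l * π / (2 * m) := by
    field_simp; ring
  rw [cos_add_cos, hmean, hhalfdiff]
  exact mul_ne_zero (mul_ne_zero two_ne_zero
    (cos_odd_mul_pi_div_four_mul_ne_zero _ (hl.trans hlm))) (cos_mul_pi_div_two_mul_pos hl hlm).ne'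

theorem stmt_5_general (m : ℕ) (l : ℕ) (hl1 : 1 ≤ l) (hl2 : l ≤ m - 1) (k : ℤ) :
    (1/2) * (1 + (1 / Real.cos (π / (4 * m))) *
        Real.cos ((4 * (l : ℝ) + 2 * (k : ℝ) + 1) * π / (4 * m))) ≠
    (1/2) * (1 - (1 / Real.cos (π / (4 * m))) *
        Real.cos ((2 * (k : ℝ) + 1) * π / (4 * m))) := by
  have hl : 0 < l := hl1
  have hlm : l < m := by omega
  have hsec : 1 / cos (π / (4 * m)) ≠ 0 := by
    simpa using cos_odd_mul_pi_div_four_mul_ne_zero 0 (hl.trans hlm)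
  intro h
  apply mul_ne_zero hsec (cos_add_cos_ne_zero hl hlm k)
  linear_combination 2 * h

/-- in the regular 4m-gon (m ≥ 2), for l ∈ {1,…,m−1} and any integer k,
the two conditional error probabilities in discriminating ω₀ from ω_{2l} never coincide. -/
theorem stmt_5 (m : ℕ) (hm : 2 ≤ m) (l : ℕ) (hl1 : 1 ≤ l) (hl2 : l ≤ m - 1) (k : ℤ) :
    (1/2) * (1 + (1 / Real.cos (π / (4 * m))) *
        Real.cos ((4 * (l : ℝ) + 2 * (k : ℝ) + 1) * π / (4 * m))) ≠
    (1/2) * (1 - (1 / Real.cos (π / (4 * m))) *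
        Real.cos ((2 * (k : ℝ) + 1) * π / (4 * m))) :=
  stmt_5_general m l hl1 hl2 k
end

section
/- Let n ≥ 3 be odd and r_n = √(sec(π/n)). For the effects e_i = (1/(1+r_n²))·(r_n cos(2πi/n), r_n sin(2πi/n), 1) and states ω_j = (r_n cos(2πj/n), r_n sin(2πj/n), 1), one has e_i·ω_j ∈ [0,1] for all i, j, with e_i·ω_i = 1 and e_i·ω_j = 0 exactly when 2π(i−j)/n differs from π by ±π/n, i.e., j ≡ i + (n±1)/2 (mod n). -/
open Real Matrix

/-!
With `c = cos (π / n) = 1 / r_n²` one computes `e_i ⬝ᵥ ω_j = (c + cos (2π (j - i) / n)) / (c + 1)`.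
For odd `n = 2t + 1` we have `-c = cos (2π t / n)`, and every multiple `2π k / n` is congruent
modulo `2π` to `± 2π m / n` with `0 ≤ m ≤ t`, so `cos (2π k / n) ≥ -c`; equality holds exactly
when `k ≡ ± t`, i.e. `k ≡ t` or `k ≡ t + 1 (mod n)`.
-/

theorem cos_two_pi_mul_div_eq_iff {n : ℕ} (hn : n ≠ 0) (a b : ℤ) :
    cos (2 * π * a / n) = cos (2 * π * b / n) ↔ a ≡ b [ZMOD n] ∨ a ≡ -b [ZMOD n] := by
  have hn' : (n : ℝ) ≠ 0 := by exact_mod_cast hn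
  have hadd : ∀ x y l : ℤ, 2 * π * x / n = 2 * l * π + 2 * π * y / n ↔ x = y + n * l := by
    intro x y l
    rw [← @Int.cast_inj ℝ]
    push_cast
    constructor <;> intro h
    · field_simp at h
      nlinarith [pi_pos]
    · rw [h]; field_simp; ring
  have hsub : ∀ x y l : ℤ, 2 * π * x / n = 2 * l * π - 2 * π * y / n ↔ -x = y + n * -l := by
    intro x y l
    rw [← neg_inj, ← hadd]; push_cast; ring_nf
  simp only [cos_eq_cos_iff, Int.modEq_iff_add_fac, hadd, hsub]
  constructor
  · rintro ⟨l, h | h⟩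
    exacts [.inl ⟨l, h⟩, .inr ⟨-l, h⟩]
  · rintro (⟨l, h⟩ | ⟨l, h⟩)
    exacts [⟨l, .inl h⟩, ⟨-l, .inr (by rwa [neg_neg])⟩]

theorem cos_two_pi_mul_div_eq_neg_cos_pi_div {n t : ℕ} (hnt : n = 2 * t + 1) :
    cos (2 * π * t / n) = -cos (π / n) := by
  have hn : (n : ℝ) = 2 * t + 1 := by exact_mod_cast hnt
  rw [← cos_pi_sub]
  congr 1
  rw [hn]
  field_simp
  ring

theorem neg_cos_pi_div_le_cos_two_pi_mul_div {n t : ℕ} (hnt : n = 2 * t + 1) (k : ℤ) :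
    -cos (π / n) ≤ cos (2 * π * k / n) := by
  have hn : (n : ℝ) = 2 * t + 1 := by exact_mod_cast hnt
  have hn0 : (0 : ℝ) < n := by rw [hn]; positivity
  set m := (k + t) % n - t
  have hm : |m| ≤ t := by
    have := Int.emod_nonneg (k + t) (by omega : (n : ℤ) ≠ 0)
    have := Int.emod_lt_of_pos (k + t) (by omega : (0 : ℤ) < n)
    rw [abs_le]; constructor <;> omega
  have hkm : k ≡ m [ZMOD n] := by
    simpa using ((Int.mod_modEq (k + t) n).sub_right (t : ℤ)).symm
  have htn : 2 * π * t / n ≤ π := by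
    rw [div_le_iff₀ hn0, hn]; nlinarith [pi_pos]
  rw [(cos_two_pi_mul_div_eq_iff (by omega) k m).2 (.inl hkm), ← cos_abs (2 * π * m / n),
    ← cos_two_pi_mul_div_eq_neg_cos_pi_div hnt]
  have habs : |2 * π * m / n| = 2 * π * (|m| : ℤ) / n := by
    rw [abs_div, abs_mul, abs_of_pos (by positivity : 0 < 2 * π), abs_of_pos hn0]; push_cast; rfl
  rw [habs]
  apply cos_le_cos_of_nonneg_of_le_pi (by positivity) htn
  gcongr
  exact_mod_cast hm

theorem cos_two_pi_mul_div_eq_neg_cos_pi_div_iff {n t : ℕ} (hnt : n = 2 * t + 1) (k : ℤ) :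
    cos (2 * π * k / n) = -cos (π / n) ↔ k ≡ t [ZMOD n] ∨ k ≡ t + 1 [ZMOD n] := by
  have ht : (t + 1 : ℤ) ≡ -t [ZMOD n] := by
    rw [Int.modEq_iff_dvd]; exact ⟨-1, by omega⟩
  rw [← cos_two_pi_mul_div_eq_neg_cos_pi_div hnt]
  exact_mod_cast (cos_two_pi_mul_div_eq_iff (by omega) k t).trans
    (or_congr_right ⟨fun h => h.trans ht.symm, fun h => h.trans ht⟩)

theorem smul_dotProduct_cos_sin_one (r a b : ℝ) :
    ((1 / (1 + r ^ 2)) • ![r * cos a, r * sin a, 1]) ⬝ᵥ ![r * cos b, r * sin b, 1] =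
      (1 + r ^ 2 * cos (b - a)) / (1 + r ^ 2) := by
  rw [cos_sub]
  simp [dotProduct, Fin.sum_univ_three]
  field_simp
  ring

theorem Nat.modEq_add_iff_intCast_sub {n i j s : ℕ} :
    j ≡ i + s [MOD n] ↔ (j : ℤ) - i ≡ s [ZMOD n] := by
  rw [← Int.natCast_modEq_iff, Int.modEq_iff_dvd, Int.modEq_iff_dvd]
  push_cast
  ring_nf

/-- for odd n ≥ 3 and r_n² = sec(π/n), the functionals
e_i = (1/(1+r_n²))(r_n cos(2πi/n), r_n sin(2πi/n), 1) are valid effects on the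
pure states ω_j = (r_n cos(2πj/n), r_n sin(2πj/n), 1): e_i·ω_j ∈ [0,1], with
e_i·ω_i = 1 and e_i·ω_j = 0 precisely when j ≡ i + (n+1)/2 or j ≡ i + (n−1)/2 (mod n). -/
theorem stmt_16 (n : ℕ) (hn : 3 ≤ n) (hodd : Odd n)
    (rn : ℝ) (hrn : rn = Real.sqrt (1 / Real.cos (π / n)))
    (ω e : ℕ → (Fin 3 → ℝ))
    (hω : ∀ j : ℕ, ω j = ![rn * Real.cos (2 * π * j / n), rn * Real.sin (2 * π * j / n), 1])
    (he : ∀ i : ℕ, e i = (1 / (1 + rn ^ 2)) •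
      ![rn * Real.cos (2 * π * i / n), rn * Real.sin (2 * π * i / n), 1]) :
    ∀ i < n, ∀ j < n,
      (0 ≤ dotProduct (e i) (ω j) ∧ dotProduct (e i) (ω j) ≤ 1) ∧
      dotProduct (e i) (ω i) = 1 ∧
      (dotProduct (e i) (ω j) = 0 ↔
        (j ≡ i + (n + 1) / 2 [MOD n] ∨ j ≡ i + (n - 1) / 2 [MOD n])) := by
  intro i _ j _
  obtain ⟨t, hnt⟩ := hodd
  set c := cos (π / n)
  have hc : 0 < c := by
    have : (3 : ℝ) ≤ n := by exact_mod_cast hn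
    refine cos_pos_of_mem_Ioo ⟨by linarith [pi_pos, (by positivity : 0 < π / n)], ?_⟩
    rw [div_lt_div_iff₀ (by linarith) two_pos]
    nlinarith [pi_pos]
  have hrn2 : rn ^ 2 = 1 / c := by rw [hrn, sq_sqrt (by positivity)]
  have hval : ∀ i j : ℕ, e i ⬝ᵥ ω j = (c + cos (2 * π * ((j : ℤ) - i : ℤ) / n)) / (c + 1) := by
    intro i j
    rw [he, hω, smul_dotProduct_cos_sin_one, hrn2]
    push_cast
    field_simp
  have hbound := neg_cos_pi_div_le_cos_two_pi_mul_div hnt ((j : ℤ) - i)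
  have hs : (n + 1) / 2 = t + 1 ∧ (n - 1) / 2 = t := by omega
  simp only [hval]
  refine ⟨⟨div_nonneg (by linarith) (by linarith), ?_⟩, ?_, ?_⟩
  · rw [div_le_one (by linarith)]; linarith [cos_le_one (2 * π * ((j : ℤ) - i : ℤ) / n)]
  · simpa using div_self (by linarith : c + 1 ≠ 0)
  · rw [div_eq_zero_iff, or_iff_left (by linarith), hs.1, hs.2, Nat.modEq_add_iff_intCast_sub,
      Nat.modEq_add_iff_intCast_sub, Nat.cast_succ, or_comm,
      ← cos_two_pi_mul_div_eq_neg_cos_pi_div_iff hnt, add_eq_zero_iff_eq_neg']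
end
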